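/- Let M be a pseudo MV-algebra. (1) If I and J are lexicographic ideals of M, then I ⊆ J or J ⊆ I. (2) Every lexicographic ideal of M is contained in the radical Rad(M). (3) If some lexicographic ideal of M is a maximal ideal, then M has a unique maximal ideal. -/

import Mathlib

open Set

namespace PseudoMV

/-! ### Basic pseudo MV-algebra notions on the interval `Γ(K,v) = [0,v]`
of a (not necessarily abelian) lattice-ordered group `K`. -/

section Defs

variable {K : Type*} [Lattice K] [AddGroup K]

/-- `v` is a strong (order) unit of `K`. -/
def IsStrongUnit (v : K) : Prop := 0 ≤ v ∧ ∀ x : K, ∃ n : ℕ, x ≤ n • v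

/-- The carrier of the pseudo MV-algebra `Γ(K,v)`. -/
def carrier (v : K) : Set K := Set.Icc 0 v

/-- `x ⊕ y = (x + y) ⊓ v`. -/
def oplus (v x y : K) : K := (x + y) ⊓ v

/-- Left negation `x⁻ = v - x`. -/
def negL (v x : K) : K := v - x

/-- Right negation `x~ = -x + v`. -/
def negR (v x : K) : K := -x + v

/-- `x ⊙ y = (x - v + y) ⊔ 0`. -/
def odot (v x y : K) : K := (x - v + y) ⊔ 0

/-- The partial sum `x + y` is defined in `Γ(K,v)`, i.e. the group sum lies in `[0,v]`. -/
def sumDef (v x y : K) : Prop := 0 ≤ x + y ∧ x + y ≤ v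

/-- `n`-fold sum `n.x = x ⊕ ⋯ ⊕ x`. -/
def nOplus (v : K) : ℕ → K → K
  | 0, _ => 0
  | n + 1, x => oplus v (nOplus v n x) x

/-- `ord(x) < ∞`, i.e. some `n ≥ 1` satisfies `n.x = 1`. -/
def OrdFinite (v x : K) : Prop := ∃ n : ℕ, 1 ≤ n ∧ nOplus v n x = v

/-- The set of infinitesimal elements: all `n`-fold partial sums `nx` are defined. -/
def Infinit (v : K) : Set K := {x | x ∈ carrier v ∧ ∀ n : ℕ, n • x ≤ v}

/-- An ideal of `Γ(K,v)`. -/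
structure IsIdeal (v : K) (I : Set K) : Prop where
  subset : I ⊆ carrier v
  nonempty : I.Nonempty
  lower : ∀ a ∈ carrier v, ∀ b ∈ I, a ≤ b → a ∈ I
  oplus_mem : ∀ a ∈ I, ∀ b ∈ I, oplus v a b ∈ I

/-- A normal ideal: `x ⊕ I = I ⊕ x` for every `x`. -/
def IsNormalIdeal (v : K) (I : Set K) : Prop :=
  IsIdeal v I ∧ ∀ x ∈ carrier v, (fun a => oplus v x a) '' I = (fun a => oplus v a x) '' I

/-- A maximal ideal: proper and not properly contained in a proper ideal. -/
def IsMaximalIdeal (v : K) (I : Set K) : Prop :=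
  IsIdeal v I ∧ I ≠ carrier v ∧ ∀ J, IsIdeal v J → I ⊆ J → J ≠ carrier v → J = I

/-- A prime ideal. -/
def IsPrimeIdeal (v : K) (I : Set K) : Prop :=
  IsIdeal v I ∧ ∀ x ∈ carrier v, ∀ y ∈ carrier v, x ⊓ y ∈ I → x ∈ I ∨ y ∈ I

/-- The radical: intersection of all maximal ideals. -/
def Rad (v : K) : Set K := ⋂₀ {I | IsMaximalIdeal v I}

/-- The normal radical: intersection of all maximal ideals that are normal. -/
def RadN (v : K) : Set K := ⋂₀ {I | IsMaximalIdeal v I ∧ IsNormalIdeal v I}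

/-- Membership in the class `𝓜`: every maximal ideal is normal. -/
def MemClassM (v : K) : Prop := ∀ I, IsMaximalIdeal v I → IsNormalIdeal v I

/-- A symmetric pseudo MV-algebra: the two negations coincide. -/
def IsSymmetric (v : K) : Prop := ∀ x ∈ carrier v, negL v x = negR v x

/-- A local pseudo MV-algebra: a unique maximal ideal, which is moreover normal. -/
def IsLocal (v : K) : Prop :=
  ∃ I, IsMaximalIdeal v I ∧ IsNormalIdeal v I ∧ ∀ J, IsMaximalIdeal v J → J = I

/-- A state on `Γ(K,v)`. -/
structure IsState (v : K) (s : K → ℝ) : Prop where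
  maps_to : ∀ x ∈ carrier v, s x ∈ Set.Icc (0 : ℝ) 1
  map_unit : s v = 1
  additive : ∀ x ∈ carrier v, ∀ y ∈ carrier v, sumDef v x y → s (x + y) = s x + s y

/-- The kernel of a state. -/
def stateKer (v : K) (s : K → ℝ) : Set K := {x | x ∈ carrier v ∧ s x = 0}

/-- `x/I = y/I` in the quotient by the (normal) ideal `I`. -/
def quotEq (v : K) (I : Set K) (x y : K) : Prop :=
  oplus v (odot v x (negL v y)) (odot v y (negL v x)) ∈ I

/-- `x/I ≤ y/I` in the quotient by the (normal) ideal `I`. -/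
def quotLE (v : K) (I : Set K) (x y : K) : Prop := odot v x (negL v y) ∈ I

/-- A commutative ideal: a normal ideal with commutative quotient. -/
def IsCommutativeIdeal (v : K) (I : Set K) : Prop :=
  IsNormalIdeal v I ∧ ∀ x ∈ carrier v, ∀ y ∈ carrier v, quotEq v I (oplus v x y) (oplus v y x)

/-- A strict ideal: `x/I < y/I` implies `x < y`. -/
def IsStrictIdeal (v : K) (I : Set K) : Prop :=
  ∀ x ∈ carrier v, ∀ y ∈ carrier v, quotLE v I x y → ¬ quotLE v I y x → x < y

/-- A retractive (normal) ideal: the canonical projection `π_I : M → M/I` admits a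
homomorphic section `δ_I` with `π_I ∘ δ_I = id`.  We encode `δ_I` by the map
`d = δ_I ∘ π_I : M → M`, which must be constant on classes, a homomorphism with respect
to the quotient operations, and a section of `π_I`. -/
def IsRetractive (v : K) (I : Set K) : Prop :=
  ∃ d : K → K,
    (∀ x ∈ carrier v, d x ∈ carrier v) ∧
    (∀ x ∈ carrier v, ∀ y ∈ carrier v, quotEq v I x y → d x = d y) ∧
    (∀ x ∈ carrier v, ∀ y ∈ carrier v, d (oplus v x y) = oplus v (d x) (d y)) ∧
    (∀ x ∈ carrier v, d (negL v x) = negL v (d x)) ∧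
    (∀ x ∈ carrier v, d (negR v x) = negR v (d x)) ∧
    d 0 = 0 ∧ d v = v ∧
    (∀ x ∈ carrier v, quotEq v I (d x) x)

/-- A lexicographic ideal: a nontrivial proper commutative ideal that is strict,
retractive and prime. -/
def IsLexIdeal (v : K) (I : Set K) : Prop :=
  IsCommutativeIdeal v I ∧ I ≠ {0} ∧ I ≠ carrier v ∧
    IsStrictIdeal v I ∧ IsRetractive v I ∧ IsPrimeIdeal v I

/-- A subalgebra of `Γ(K,v)`. -/
def IsSubalgebra (v : K) (S : Set K) : Prop :=
  S ⊆ carrier v ∧ 0 ∈ S ∧ v ∈ S ∧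
    (∀ x ∈ S, ∀ y ∈ S, oplus v x y ∈ S) ∧
    (∀ x ∈ S, negL v x ∈ S) ∧ (∀ x ∈ S, negR v x ∈ S)

/-- The subalgebra generated by a subset. -/
def genSubalg (v : K) (A : Set K) : Set K := ⋂₀ {S | IsSubalgebra v S ∧ A ⊆ S}

end Defs

/-! ### `(H,u)`-decompositions -/

section Decomp

variable {H : Type*} [AddCommGroup H] [LinearOrder H] [IsOrderedAddMonoid H]
variable {K : Type*} [Lattice K] [AddGroup K]

/-- An `(H,u)`-decomposition of the pseudo MV-algebra `Γ(K,v)`. -/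
structure IsDecomposition (u : H) (v : K) (Md : H → Set K) : Prop where
  nonempty : ∀ t ∈ Set.Icc (0 : H) u, (Md t).Nonempty
  subset : ∀ t ∈ Set.Icc (0 : H) u, Md t ⊆ carrier v
  disjoint : ∀ s ∈ Set.Icc (0 : H) u, ∀ t ∈ Set.Icc (0 : H) u, s ≠ t → Md s ∩ Md t = ∅
  cover : ∀ x ∈ carrier v, ∃ t ∈ Set.Icc (0 : H) u, x ∈ Md t
  mono : ∀ s ∈ Set.Icc (0 : H) u, ∀ t ∈ Set.Icc (0 : H) u, s < t →
    ∀ a ∈ Md s, ∀ b ∈ Md t, a ≤ b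
  negL_eq : ∀ t ∈ Set.Icc (0 : H) u, negL v '' Md t = Md (u - t)
  negR_eq : ∀ t ∈ Set.Icc (0 : H) u, negR v '' Md t = Md (u - t)
  oplus_mem : ∀ s ∈ Set.Icc (0 : H) u, ∀ t ∈ Set.Icc (0 : H) u, ∀ x ∈ Md s, ∀ y ∈ Md t,
    oplus v x y ∈ Md (min (s + t) u)

/-- A strong cyclic family for an `(H,u)`-decomposition. -/
def StrongCyclicFamily (u : H) (v : K) (Md : H → Set K) (c : H → K) : Prop :=
  (∀ t ∈ Set.Icc (0 : H) u, c t ∈ Md t ∧ ∀ x : K, c t + x = x + c t) ∧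
  (∀ s ∈ Set.Icc (0 : H) u, ∀ t ∈ Set.Icc (0 : H) u, s + t ≤ u → c s + c t = c (s + t)) ∧
  c u = v

/-- A strong `(H,u)`-perfect pseudo MV-algebra. -/
def IsStrongPerfect (u : H) (v : K) : Prop :=
  ∃ Md c, IsDecomposition u v Md ∧ StrongCyclicFamily u v Md c

/-- A weak cyclic family for an `(H,u)`-decomposition. -/
def WeakCyclicFamily (u : H) (v : K) (Md : H → Set K) (c : H → K) : Prop :=
  c 0 = 0 ∧
  (∀ t ∈ Set.Icc (0 : H) u, c t ∈ Md t ∧ ∀ x : K, c t + x = x + c t) ∧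
  (∀ s ∈ Set.Icc (0 : H) u, ∀ t ∈ Set.Icc (0 : H) u, s + t ≤ u → c s + c t = c (s + t))

end Decomp

/-! ### Isomorphisms -/

section Iso

variable {K : Type*} [Lattice K] [AddGroup K]
variable {K' : Type*} [Lattice K'] [AddGroup K']

/-- An isomorphism of the pseudo MV-algebras `Γ(K,v)` and `Γ(K',v')` (encoded as a map
`K → K'` whose restriction to `[0,v]` is a bijection onto `[0,v']` preserving all
pseudo MV-operations). -/
structure IsPMVIso (v : K) (v' : K') (f : K → K') : Prop where
  maps_to : ∀ x ∈ carrier v, f x ∈ carrier v'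
  inj : ∀ x ∈ carrier v, ∀ y ∈ carrier v, f x = f y → x = y
  surj : ∀ y ∈ carrier v', ∃ x ∈ carrier v, f x = y
  map_zero : f 0 = 0
  map_unit : f v = v'
  map_oplus : ∀ x ∈ carrier v, ∀ y ∈ carrier v, f (oplus v x y) = oplus v' (f x) (f y)
  map_negL : ∀ x ∈ carrier v, f (negL v x) = negL v' (f x)
  map_negR : ∀ x ∈ carrier v, f (negR v x) = negR v' (f x)

/-- The pseudo MV-algebras `Γ(K,v)` and `Γ(K',v')` are isomorphic. -/
def PMVIsomorphic (v : K) (v' : K') : Prop := ∃ f, IsPMVIso v v' f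

end Iso

/-- An isomorphism of lattice-ordered groups: an order isomorphism that is additive. -/
def LGroupIsomorphic (G : Type*) (G' : Type*) [Lattice G] [AddGroup G] [Lattice G']
    [AddGroup G'] : Prop :=
  ∃ e : G ≃o G', ∀ x y : G, e (x + y) = e x + e y

/-! ### The lexicographic product of a linearly ordered group and a lattice-ordered group -/

/-- The lexicographic product `H ×ₗ G`. -/
@[ext]
structure LexProd (H : Type*) (G : Type*) where
  fst : H
  snd : G

namespace LexProd

variable {H : Type*} {G : Type*}

section Group

variable [AddGroup H] [AddGroup G]

instance : Add (LexProd H G) := ⟨fun p q => ⟨p.fst + q.fst, p.snd + q.snd⟩⟩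
instance : Zero (LexProd H G) := ⟨⟨0, 0⟩⟩
instance : Neg (LexProd H G) := ⟨fun p => ⟨-p.fst, -p.snd⟩⟩

instance : AddGroup (LexProd H G) :=
  AddGroup.ofLeftAxioms (fun a b c => LexProd.ext (add_assoc _ _ _) (add_assoc _ _ _))
    (fun a => LexProd.ext (zero_add _) (zero_add _))
    (fun a => LexProd.ext (neg_add_cancel _) (neg_add_cancel _))

@[simp] lemma add_fst (p q : LexProd H G) : (p + q).fst = p.fst + q.fst := rfl
@[simp] lemma add_snd (p q : LexProd H G) : (p + q).snd = p.snd + q.snd := rfl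
@[simp] lemma zero_fst : (0 : LexProd H G).fst = 0 := rfl
@[simp] lemma zero_snd : (0 : LexProd H G).snd = 0 := rfl

end Group

section Order

variable [LinearOrder H] [Lattice G]

instance : PartialOrder (LexProd H G) where
  le p q := p.fst < q.fst ∨ (p.fst = q.fst ∧ p.snd ≤ q.snd)
  le_refl p := Or.inr ⟨rfl, le_rfl⟩
  le_trans p q r := by
    rintro (h | ⟨h1, h2⟩) (h' | ⟨h1', h2'⟩)
    · exact Or.inl (h.trans h')
    · exact Or.inl (h1' ▸ h)
    · exact Or.inl (h1 ▸ h')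
    · exact Or.inr ⟨h1.trans h1', h2.trans h2'⟩
  le_antisymm p q := by
    rintro (h | ⟨h1, h2⟩) (h' | ⟨h1', h2'⟩)
    · exact absurd (h.trans h') (lt_irrefl _)
    · exact absurd h (h1' ▸ lt_irrefl _)
    · exact absurd h' (h1 ▸ lt_irrefl _)
    · exact LexProd.ext h1 (le_antisymm h2 h2')

lemma le_def {p q : LexProd H G} :
    p ≤ q ↔ p.fst < q.fst ∨ (p.fst = q.fst ∧ p.snd ≤ q.snd) := Iff.rfl

instance : Lattice (LexProd H G) :=
  { (inferInstance : PartialOrder (LexProd H G)) with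
    sup := fun p q =>
      if p.fst < q.fst then q else if q.fst < p.fst then p else ⟨p.fst, p.snd ⊔ q.snd⟩
    inf := fun p q =>
      if p.fst < q.fst then p else if q.fst < p.fst then q else ⟨p.fst, p.snd ⊓ q.snd⟩
    le_sup_left := fun p q => by
      try dsimp only
      split_ifs with h1 h2
      · exact Or.inl h1
      · exact le_rfl
      · exact Or.inr ⟨rfl, le_sup_left⟩
    le_sup_right := fun p q => by
      try dsimp only
      split_ifs with h1 h2
      · exact le_rfl
      · exact Or.inl h2
      · exact Or.inr ⟨le_antisymm (not_lt.mp h1) (not_lt.mp h2), le_sup_right⟩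
    sup_le := fun p q r hp hq => by
      try dsimp only
      split_ifs with h1 h2
      · exact hq
      · exact hp
      · have hfq : p.fst = q.fst := le_antisymm (not_lt.mp h2) (not_lt.mp h1)
        rcases hp with hp | ⟨hp1, hp2⟩
        · exact Or.inl hp
        · rcases hq with hq | ⟨hq1, hq2⟩
          · exact Or.inl (lt_of_eq_of_lt hfq hq)
          · exact Or.inr ⟨hp1, sup_le hp2 hq2⟩
    inf_le_left := fun p q => by
      try dsimp only
      split_ifs with h1 h2
      · exact le_rfl
      · exact Or.inl h2
      · exact Or.inr ⟨rfl, inf_le_left⟩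
    inf_le_right := fun p q => by
      try dsimp only
      split_ifs with h1 h2
      · exact Or.inl h1
      · exact le_rfl
      · exact Or.inr ⟨le_antisymm (not_lt.mp h2) (not_lt.mp h1), inf_le_right⟩
    le_inf := fun p q r hq hr => by
      try dsimp only
      split_ifs with h1 h2
      · exact hq
      · exact hr
      · have hfq : q.fst = r.fst := le_antisymm (not_lt.mp h2) (not_lt.mp h1)
        rcases hq with hq | ⟨hq1, hq2⟩
        · exact Or.inl hq
        · rcases hr with hr | ⟨hr1, hr2⟩
          · exact Or.inl (lt_of_lt_of_eq hr hfq.symm)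
          · exact Or.inr ⟨hq1, le_inf hq2 hr2⟩ }

end Order

section Covariant

variable [AddCommGroup H] [LinearOrder H] [IsOrderedAddMonoid H] [Lattice G] [AddGroup G]
  [CovariantClass G G (· + ·) (· ≤ ·)] [CovariantClass G G (Function.swap (· + ·)) (· ≤ ·)]

instance : CovariantClass (LexProd H G) (LexProd H G) (· + ·) (· ≤ ·) := by
  constructor
  rintro a x y (h | ⟨h1, h2⟩)
  · exact Or.inl (add_lt_add_right h a.fst)
  · exact Or.inr ⟨by simp [h1], add_le_add_right h2 a.snd⟩

instance : CovariantClass (LexProd H G) (LexProd H G) (Function.swap (· + ·)) (· ≤ ·) := by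
  constructor
  rintro a x y (h | ⟨h1, h2⟩)
  · exact Or.inl (add_lt_add_left h a.fst)
  · exact Or.inr ⟨by simp [h1], add_le_add_left h2 a.snd⟩

end Covariant

end LexProd

/-! ### Bundled lattice-ordered groups and linearly ordered unital abelian groups -/

universe u

/-- A bundled (not necessarily abelian) lattice-ordered group. -/
structure LGroupS : Type (u + 1) where
  carrier : Type u
  [lat : Lattice carrier]
  [grp : AddGroup carrier]
  [cov_left : CovariantClass carrier carrier (· + ·) (· ≤ ·)]
  [cov_right : CovariantClass carrier carrier (Function.swap (· + ·)) (· ≤ ·)]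

attribute [instance] LGroupS.lat LGroupS.grp LGroupS.cov_left LGroupS.cov_right

/-- A bundled linearly ordered abelian group with a strong unit. -/
structure LoGroupU : Type (u + 1) where
  carrier : Type u
  [strG : AddCommGroup carrier]
  [strO : LinearOrder carrier]
  [strM : IsOrderedAddMonoid carrier]
  unit : carrier
  isStrongUnit : IsStrongUnit unit

attribute [instance] LoGroupU.strG LoGroupU.strO LoGroupU.strM

/-- A lexicographic pseudo MV-algebra: one isomorphic to `Γ(H ×ₗ G, (u,0))` for some
linearly ordered abelian group `H` with strong unit `u` and some ℓ-group `G`. -/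
def IsLexicographicPMV.{u₁, u₂, u₃} {K : Type u₃} [Lattice K] [AddGroup K] (v : K) : Prop :=
  ∃ (Hs : LoGroupU.{u₁}) (Gs : LGroupS.{u₂}),
    PMVIsomorphic v (LexProd.mk Hs.unit (0 : Gs.carrier))

end PseudoMV

/-! A strict ideal `I` lies strictly below everything outside it: for `y ∈ I` and `x ∉ I` we
have `y/I ≤ x/I` but not `x/I ≤ y/I` (otherwise `x ≤ (x ⊙ y⁻) ⊕ y ∈ I`), so strictness
forces `y < x`. Hence a strict ideal is comparable with every ideal, which gives all three
claims at once. -/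

namespace PseudoMV

variable {K : Type*} [Lattice K] [AddGroup K] {v : K} {I J : Set K}

lemma odot_negL (a b : K) : odot v a (negL v b) = (a - b) ⊔ 0 := by
  simp only [odot, negL, sub_add_sub_cancel]

lemma quotLE_of_mem [CovariantClass K K (· + ·) (· ≤ ·)] (hI : IsIdeal v I) {x y : K}
    (hy : y ∈ I) (hx : x ∈ carrier v) : quotLE v I y x := by
  have hyx : (y - x) ⊔ 0 ≤ y := sup_le (sub_le_self y hx.1) (hI.subset hy).1
  rw [quotLE, odot_negL]
  exact hI.lower _ ⟨le_sup_right, hyx.trans (hI.subset hy).2⟩ y hy hyx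

lemma not_quotLE_of_mem_of_notMem [CovariantClass K K (Function.swap (· + ·)) (· ≤ ·)]
    (hI : IsIdeal v I) {x y : K} (hy : y ∈ I) (hx : x ∈ carrier v) (hxI : x ∉ I) :
    ¬ quotLE v I x y := by
  intro hxy
  rw [quotLE, odot_negL] at hxy
  have hx_le : x ≤ oplus v ((x - y) ⊔ 0) y :=
    le_inf ((sub_add_cancel x y).symm.le.trans (add_le_add_left le_sup_left y)) hx.2
  exact hxI (hI.lower x hx _ (hI.oplus_mem _ hxy y hy) hx_le)

variable [CovariantClass K K (· + ·) (· ≤ ·)] [CovariantClass K K (Function.swap (· + ·)) (· ≤ ·)]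

lemma IsStrictIdeal.lt_of_mem_of_notMem (hS : IsStrictIdeal v I) (hI : IsIdeal v I)
    {x y : K} (hy : y ∈ I) (hx : x ∈ carrier v) (hxI : x ∉ I) : y < x :=
  hS y (hI.subset hy) x hx (quotLE_of_mem hI hy hx) (not_quotLE_of_mem_of_notMem hI hy hx hxI)

lemma IsStrictIdeal.subset_or_subset (hS : IsStrictIdeal v I) (hI : IsIdeal v I)
    (hJ : IsIdeal v J) : I ⊆ J ∨ J ⊆ I := by
  refine or_iff_not_imp_left.mpr fun hIJ => ?_
  obtain ⟨a, haI, haJ⟩ := not_subset.mp hIJ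
  intro b hbJ
  by_contra hbI
  have hab : a < b := hS.lt_of_mem_of_notMem hI haI (hJ.subset hbJ) hbI
  exact haJ (hJ.lower a (hI.subset haI) b hbJ hab.le)

lemma IsStrictIdeal.subset_of_isMaximalIdeal (hS : IsStrictIdeal v I) (hI : IsIdeal v I)
    (hI_ne : I ≠ carrier v) (hJ : IsMaximalIdeal v J) : I ⊆ J :=
  (hS.subset_or_subset hI hJ.1).elim id fun hJI => (hJ.2.2 I hI hJI hI_ne).le

lemma IsLexIdeal.subset_of_isMaximalIdeal (hI : IsLexIdeal v I) (hJ : IsMaximalIdeal v J) :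
    I ⊆ J :=
  hI.2.2.2.1.subset_of_isMaximalIdeal hI.1.1.1 hI.2.2.1 hJ

end PseudoMV

open PseudoMV in
theorem stmt_12_general {K : Type*} [Lattice K] [AddGroup K]
    [CovariantClass K K (· + ·) (· ≤ ·)] [CovariantClass K K (Function.swap (· + ·)) (· ≤ ·)]
    (v : K) :
    (∀ I J : Set K, IsLexIdeal v I → IsLexIdeal v J → I ⊆ J ∨ J ⊆ I) ∧
    (∀ I : Set K, IsLexIdeal v I → I ⊆ Rad v) ∧
    (∀ I : Set K, IsLexIdeal v I → IsMaximalIdeal v I →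
      ∃ J : Set K, IsMaximalIdeal v J ∧ ∀ J' : Set K, IsMaximalIdeal v J' → J' = J) := by
  refine ⟨fun I J hI hJ => hI.2.2.2.1.subset_or_subset hI.1.1.1 hJ.1.1.1,
    fun I hI => subset_sInter fun J hJ => hI.subset_of_isMaximalIdeal hJ,
    fun I hI hI_max => ⟨I, hI_max, fun J hJ => ?_⟩⟩
  exact hI_max.2.2 J hJ.1 (hI.subset_of_isMaximalIdeal hJ) hJ.2.1

open PseudoMV in
/-- Proposition 7.1: lexicographic ideals are linearly ordered by inclusion, each is
contained in the radical, and if one of them is maximal, `M` has a unique maximal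
ideal. -/
theorem stmt_12 {K : Type*} [Lattice K] [AddGroup K]
    [CovariantClass K K (· + ·) (· ≤ ·)] [CovariantClass K K (Function.swap (· + ·)) (· ≤ ·)]
    (v : K) (hv : IsStrongUnit v) :
    (∀ I J : Set K, IsLexIdeal v I → IsLexIdeal v J → I ⊆ J ∨ J ⊆ I) ∧
    (∀ I : Set K, IsLexIdeal v I → I ⊆ Rad v) ∧
    (∀ I : Set K, IsLexIdeal v I → IsMaximalIdeal v I →
      ∃ J : Set K, IsMaximalIdeal v J ∧ ∀ J' : Set K, IsMaximalIdeal v J' → J' = J) :=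
  stmt_12_general v
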